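/- The momentum layer is an exact Hamiltonian flow: Let V_p : ℝ × ℝ^d → ℝ be twice continuously differentiable, and define the map φ_{p,t}(q,p) = (q + (∇_p V_p(t,p) − ∇_p V_p(0,p)), p). Then φ_{p,0} is the identity on ℝ^{2d}, and for every (q₀,p₀) ∈ ℝ^{2d} and t ∈ ℝ, ∂_t φ_{p,t}(q₀,p₀) = J ∇_x H_p(t, φ_{p,t}(q₀,p₀)), where H_p(t,(q,p)) = ∂_t V_p(t,p). -/

import Mathlib

noncomputable section

/-- Phase-space factor `ℝ^d`. -/
abbrev Vec (d : ℕ) := EuclideanSpace ℝ (Fin d)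

/-- Phase space `ℝ^{2d}` split as positions and momenta. -/
abbrev Phase (d : ℕ) := Vec d × Vec d

/-- Gradient with respect to the position variable. -/
def gradQ {d : ℕ} (H : Phase d → ℝ) (x : Phase d) : Vec d :=
  gradient (fun q => H (q, x.2)) x.1

/-- Gradient with respect to the momentum variable. -/
def gradP {d : ℕ} (H : Phase d → ℝ) (x : Phase d) : Vec d :=
  gradient (fun p => H (x.1, p)) x.2

/-- `J ∇H (q,p) = (∇ₚH(q,p), −∇_qH(q,p))`. -/
def JgradH {d : ℕ} (H : Phase d → ℝ) (x : Phase d) : Phase d :=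
  (gradP H x, - gradQ H x)

/-- Momentum layer `φ_{p,t}(q,p) = (q + (∇_p V(t,p) − ∇_p V(0,p)), p)`. -/
def layerP {d : ℕ} (V : ℝ → Vec d → ℝ) (t : ℝ) (x : Phase d) : Phase d :=
  (x.1 + (gradient (V t) x.2 - gradient (V 0) x.2), x.2)

/-!
Only the position component of `φ_{p,t}(q₀,p₀)` moves, with velocity `∂ₜ ∇_p V_p(t,p₀)`. Since `V_p`
is `C²`, its second derivative is symmetric, so this velocity is `∇_p ∂ₜ V_p(t,p₀) = ∇_p H_p`;
and `∇_q H_p = 0` because `H_p` does not depend on `q`.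
-/

open ContinuousLinearMap

section PartialDerivatives

variable {E F : Type*} [NormedAddCommGroup E] [NormedSpace ℝ E]
  [NormedAddCommGroup F] [NormedSpace ℝ F]

theorem HasFDerivAt.partial_fst {f : ℝ × E → F} {f' : ℝ × E →L[ℝ] F} {t : ℝ} {p : E}
    (hf : HasFDerivAt f f' (t, p)) : HasDerivAt (fun s => f (s, p)) (f' (1, 0)) t :=
  hf.comp_hasDerivAt t ((hasDerivAt_id t).prodMk (hasDerivAt_const t p))

theorem HasFDerivAt.partial_snd {f : ℝ × E → F} {f' : ℝ × E →L[ℝ] F} {t : ℝ} {p : E}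
    (hf : HasFDerivAt f f' (t, p)) : HasFDerivAt (fun v => f (t, v)) (f'.comp (inr ℝ ℝ E)) p :=
  hf.comp p (hasFDerivAt_prodMk_right t p)

theorem hasDerivAt_fderiv_of_contDiff_uncurry {V : ℝ → E → F}
    (hV : ContDiff ℝ 2 (fun z : ℝ × E => V z.1 z.2)) (t : ℝ) (p : E) :
    HasDerivAt (fun s => fderiv ℝ (V s) p) (fderiv ℝ (fun v => deriv (fun s => V s v) t) p) t := by
  set f : ℝ × E → F := fun z => V z.1 z.2
  have hf : Differentiable ℝ f := hV.differentiable two_ne_zero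
  have hf' : Differentiable ℝ (fderiv ℝ f) :=
    (hV.fderiv_right (m := 1) le_rfl).differentiable one_ne_zero
  set B := fderiv ℝ (fderiv ℝ f) (t, p)
  have hB : IsSymmSndFDerivAt ℝ f (t, p) := hV.contDiffAt.isSymmSndFDerivAt (by simp)
  have hspace : (fun s => fderiv ℝ (V s) p) = fun s => (fderiv ℝ f (s, p)).comp (inr ℝ ℝ E) :=
    funext fun s => (hf (s, p)).hasFDerivAt.partial_snd.fderiv
  have htime : (fun v => deriv (fun s => V s v) t) = fun v => fderiv ℝ f (t, v) (1, 0) :=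
    funext fun v => (hf (t, v)).hasFDerivAt.partial_fst.deriv
  have hspace_time : HasFDerivAt (fun v => fderiv ℝ f (t, v) (1, 0))
      ((apply ℝ F ((1 : ℝ), (0 : E))).comp (B.comp (inr ℝ ℝ E))) p :=
    (apply ℝ F ((1 : ℝ), (0 : E))).hasFDerivAt.comp p (hf' (t, p)).hasFDerivAt.partial_snd
  have htime_space : HasDerivAt (fun s => (fderiv ℝ f (s, p)).comp (inr ℝ ℝ E))
      ((B (1, 0)).comp (inr ℝ ℝ E)) t :=
    ((compL ℝ E (ℝ × E) F).flip (inr ℝ ℝ E)).hasFDerivAt.comp_hasDerivAt t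
      (hf' (t, p)).hasFDerivAt.partial_fst
  rw [hspace, htime, hspace_time.fderiv]
  convert htime_space using 1
  ext w
  exact hB (0, w) (1, 0)

end PartialDerivatives

theorem hasDerivAt_gradient_of_contDiff_uncurry {E : Type*} [NormedAddCommGroup E]
    [InnerProductSpace ℝ E] [CompleteSpace E] {V : ℝ → E → ℝ}
    (hV : ContDiff ℝ 2 (fun z : ℝ × E => V z.1 z.2)) (t : ℝ) (p : E) :
    HasDerivAt (fun s => gradient (V s) p)
      (gradient (fun v => deriv (fun s => V s v) t) p) t :=
  (InnerProductSpace.toDual ℝ E).symm.toContinuousLinearEquiv.hasFDerivAt.comp_hasDerivAt t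
    (hasDerivAt_fderiv_of_contDiff_uncurry hV t p)

theorem JgradH_comp_snd {d : ℕ} (K : Vec d → ℝ) (x : Phase d) :
    JgradH (fun y : Phase d => K y.2) x = (gradient K x.2, 0) := by
  simp [JgradH, gradP, gradQ]

theorem momentum_layer_is_hamiltonian_flow
    (d : ℕ) (Vp : ℝ → Vec d → ℝ)
    (hVp : ContDiff ℝ 2 (fun z : ℝ × Vec d => Vp z.1 z.2)) :
    (∀ x : Phase d, layerP Vp 0 x = x) ∧
    (∀ (x : Phase d) (t : ℝ),
      HasDerivAt (fun s => layerP Vp s x)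
        (JgradH (fun y : Phase d => deriv (fun s => Vp s y.2) t) (layerP Vp t x)) t) := by
  refine ⟨fun x => by simp [layerP], fun x t => ?_⟩
  rw [JgradH_comp_snd (fun v => deriv (fun s => Vp s v) t)]
  exact (((hasDerivAt_gradient_of_contDiff_uncurry hVp t x.2).sub_const _).const_add x.1).prodMk
    (hasDerivAt_const t x.2)
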